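/- arXiv:2111.04661 — 6 statements merged into one kernel-verified Lean document; each statement's English description precedes it below -/
import Mathlib

section
/- For any function F : F_{p^n} -> F_{p^m}, any c in F_{p^m}, and any a_1,...,a_n in F_{p^n}, the following inversion identity holds: F(x + a_1 + ... + a_n) = sum over i from 0 to n, sum over all strictly increasing index sequences 1 <= j_1 < ... < j_i <= n, of c^{n-i} * _cD^{(i)}_{a_{j_1},...,a_{j_i}}F(x). -/
/-!
Since `F (y + a) = cD_a F (y) + c * F y`, splitting off the first direction `a₀` and applying the
identity for the remaining directions to both `cD_{a₀} F` and `F` reproduces the sum over subsets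
of `{0, …, t}`, grouped according to whether they contain `0`.
-/

/-- The multiplicative `c`-derivative of `F` in direction `a`. -/
def cDeriv {K L : Type*} [Add K] [Ring L] (c : L) (a : K) (F : K → L) : K → L :=
  fun x => F (x + a) - c * F x

/-- The iterated (higher order) `c`-derivative of `F` in directions `as = [a₁, …, aₜ]`,
differentiating first in direction `a₁`, then `a₂`, etc. -/
def cDerivIter {K L : Type*} [Add K] [Ring L] (c : L) (as : List K) (F : K → L) : K → L :=
  as.foldl (fun G a => cDeriv c a G) F

open Finset

theorem Finset.sum_powerset_map {α β M : Type*} [AddCommMonoid M] (f : α ↪ β) (s : Finset α)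
    (g : Finset β → M) :
    ∑ J ∈ (s.map f).powerset, g J = ∑ I ∈ s.powerset, g (I.map f) := by
  have : (s.map f).powerset = s.powerset.map (mapEmbedding f).toEmbedding := by
    ext J
    simp [subset_map_iff, eq_comm]
  rw [this, sum_map]
  rfl

theorem Fin.sum_univ_finset_succ {M : Type*} [AddCommMonoid M] {t : ℕ}
    (g : Finset (Fin (t + 1)) → M) :
    ∑ I, g I = ∑ I : Finset (Fin t),
      (g (I.map (Fin.succEmb t)) + g (insert 0 (I.map (Fin.succEmb t)))) := by
  rw [← powerset_univ, Fin.univ_succ, cons_eq_insert, sum_powerset_insert (by simp),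
    sum_powerset_map, sum_powerset_map, powerset_univ, ← sum_add_distrib]
  rfl

theorem Finset.sort_map_succEmb {t : ℕ} (I : Finset (Fin t)) :
    (I.map (Fin.succEmb t)).sort (· ≤ ·) = (I.sort (· ≤ ·)).map Fin.succ :=
  ((Fin.strictMono_succ.strictMonoOn _).map_finsetSort).symm

theorem Finset.sort_insert_zero_map_succEmb {t : ℕ} (I : Finset (Fin t)) :
    (insert 0 (I.map (Fin.succEmb t))).sort (· ≤ ·) = 0 :: (I.sort (· ≤ ·)).map Fin.succ := by
  rw [sort_insert _ (fun b _ => Fin.zero_le b) (by simp), sort_map_succEmb]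

section

variable {K L : Type*} [Add K] [Ring L] (c : L)

theorem cDeriv_add_mul (a : K) (F : K → L) (x : K) : cDeriv c a F x + c * F x = F (x + a) :=
  sub_add_cancel _ _

theorem cDerivIter_cons (a : K) (as : List K) (F : K → L) :
    cDerivIter c (a :: as) F = cDerivIter c as (cDeriv c a F) := rfl

end

theorem apply_add_sum_eq_sum_cDerivIter {K L : Type*} [AddCommMonoid K] [Ring L] (c : L)
    (t : ℕ) (a : Fin t → K) (F : K → L) (x : K) :
    F (x + ∑ i, a i) =
      ∑ I : Finset (Fin t), c ^ (t - #I) * cDerivIter c ((I.sort (· ≤ ·)).map a) F x := by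
  induction t generalizing F with
  | zero => rw [Fintype.sum_subsingleton (ι := Finset (Fin 0)) _ ∅]; simp [cDerivIter]
  | succ t ih =>
    set y := x + ∑ i : Fin t, a i.succ
    calc F (x + ∑ i, a i) = cDeriv c (a 0) F y + c * F y := by
          rw [cDeriv_add_mul, Fin.sum_univ_succ, add_left_comm, add_comm]
      _ = _ := by
          rw [ih _ (cDeriv c (a 0) F), ih _ F, mul_sum, ← sum_add_distrib,
            Fin.sum_univ_finset_succ]
          refine sum_congr rfl fun I _ => ?_
          have hI : #I ≤ t := by simpa using card_le_univ I
          rw [sort_map_succEmb, sort_insert_zero_map_succEmb, card_insert_of_notMem (by simp),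
            card_map, Nat.sub_add_comm hI, Nat.add_sub_add_right, pow_succ', List.map_cons,
            List.map_map, cDerivIter_cons, mul_assoc, add_comm]
          rfl

theorem stmt5_general (K L : Type*) [Field K] [Field L]
    (F : K → L) (c : L) (t : ℕ) (a : Fin t → K) :
    ∀ x : K, F (x + ∑ i, a i)
      = ∑ I : Finset (Fin t), c ^ (t - I.card)
          * cDerivIter c ((I.sort (· ≤ ·)).map a) F x :=
  apply_add_sum_eq_sum_cDerivIter c t a F

theorem stmt5 (p N m : ℕ) (hp : p.Prime) (hN : 0 < N) (hm : 0 < m)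
    (K L : Type*) [Field K] [Fintype K] [Field L] [Fintype L]
    (hK : Fintype.card K = p ^ N) (hL : Fintype.card L = p ^ m)
    (F : K → L) (c : L) (t : ℕ) (a : Fin t → K) :
    ∀ x : K, F (x + ∑ i, a i)
      = ∑ I : Finset (Fin t), c ^ (t - I.card)
          * cDerivIter c ((I.sort (· ≤ ·)).map a) F x :=
  stmt5_general K L F c t a
end

section
/- Let F(x) = x^{2^n-2} on F_{2^n}, c in F_{2^n} with c != 0, 1, a_1, a_2 in F_{2^n} with a_1 != a_2, and b in F_{2^n}. The number of x in F_{2^n} \ {0, a_1, a_2, a_1+a_2} satisfying _cD^{(2)}_{a_1,a_2}F(x) = b is at most 4 if b != 0 and at most 3 if b = 0; such x are roots of the polynomial b x^4 + (1+c^2) x^3 + (a_2 + c a_2 + b a_2^2 + a_1 + c a_1 + b a_1^2 + b a_1 a_2) x^2 + (a_1 a_2 + c a_2^2 + c^2 a_2^2 + c a_1^2 + c^2 a_1^2 + c^2 a_1 a_2 + b a_1 a_2^2 + b a_1^2 a_2) x + c^2 a_1 a_2 (a_1 + a_2). -/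
theorem stmt14 (n : ℕ) (hn : 1 ≤ n)
    (K : Type*) [Field K] [Fintype K] (hK : Fintype.card K = 2 ^ n)
    (c : K) (hc0 : c ≠ 0) (hc1 : c ≠ 1) (a₁ a₂ : K) (ha : a₁ ≠ a₂) (b : K) :
    (∀ x : K, x ∉ ({0, a₁, a₂, a₁ + a₂} : Set K) →
      cDerivIter c [a₁, a₂] (fun y => y ^ (2 ^ n - 2)) x = b →
      b * x ^ 4 + (1 + c ^ 2) * x ^ 3
        + (a₂ + c * a₂ + b * a₂ ^ 2 + a₁ + c * a₁ + b * a₁ ^ 2 + b * a₁ * a₂) * x ^ 2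
        + (a₁ * a₂ + c * a₂ ^ 2 + c ^ 2 * a₂ ^ 2 + c * a₁ ^ 2 + c ^ 2 * a₁ ^ 2
            + c ^ 2 * a₁ * a₂ + b * a₁ * a₂ ^ 2 + b * a₁ ^ 2 * a₂) * x
        + c ^ 2 * a₁ * a₂ * (a₁ + a₂) = 0) ∧
    (b ≠ 0 → Nat.card {x : K // x ∉ ({0, a₁, a₂, a₁ + a₂} : Set K) ∧
        cDerivIter c [a₁, a₂] (fun y => y ^ (2 ^ n - 2)) x = b} ≤ 4) ∧
    (b = 0 → Nat.card {x : K // x ∉ ({0, a₁, a₂, a₁ + a₂} : Set K) ∧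
        cDerivIter c [a₁, a₂] (fun y => y ^ (2 ^ n - 2)) x = b} ≤ 3) := by
  classical
  -- characteristic 2
  have hchar : (2 : K) = 0 := by
    have hcard : ((Fintype.card K : K)) = 0 := FiniteField.cast_card_eq_zero K
    rw [hK] at hcard
    push_cast at hcard
    exact pow_eq_zero_iff (by omega) |>.mp hcard
  have hq2 : 2 ≤ 2 ^ n := by
    calc 2 = 2 ^ 1 := rfl
    _ ≤ 2 ^ n := Nat.pow_le_pow_right (by norm_num) hn
  -- inverse lemma
  have hinv : ∀ y : K, y ≠ 0 → y ^ (2 ^ n - 2) = y⁻¹ := by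
    intro y hy
    have h1 : y ^ (2 ^ n - 1) = 1 := by
      rw [← hK]; exact FiniteField.pow_card_sub_one_eq_one y hy
    have : y ^ (2 ^ n - 2) * y = 1 := by
      rw [← pow_succ]
      have : 2 ^ n - 2 + 1 = 2 ^ n - 1 := by omega
      rw [this, h1]
    exact eq_inv_of_mul_eq_one_left (by linear_combination this)
  have main : ∀ x : K, x ∉ ({0, a₁, a₂, a₁ + a₂} : Set K) →
      cDerivIter c [a₁, a₂] (fun y => y ^ (2 ^ n - 2)) x = b →
      b * x ^ 4 + (1 + c ^ 2) * x ^ 3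
        + (a₂ + c * a₂ + b * a₂ ^ 2 + a₁ + c * a₁ + b * a₁ ^ 2 + b * a₁ * a₂) * x ^ 2
        + (a₁ * a₂ + c * a₂ ^ 2 + c ^ 2 * a₂ ^ 2 + c * a₁ ^ 2 + c ^ 2 * a₁ ^ 2
            + c ^ 2 * a₁ * a₂ + b * a₁ * a₂ ^ 2 + b * a₁ ^ 2 * a₂) * x
        + c ^ 2 * a₁ * a₂ * (a₁ + a₂) = 0 := by
    intro x hx hEq
    simp only [Set.mem_insert_iff, Set.mem_singleton_iff, not_or] at hx
    obtain ⟨hx0, hxa1, hxa2, hxa12⟩ := hx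
    have h1 : x + a₁ ≠ 0 := by
      intro h; apply hxa1; linear_combination h - a₁ * hchar
    have h2 : x + a₂ ≠ 0 := by
      intro h; apply hxa2; linear_combination h - a₂ * hchar
    have h12 : x + a₁ + a₂ ≠ 0 := by
      intro h; apply hxa12; linear_combination h - (a₁ + a₂) * hchar
    have hEq' : (x + a₁ + a₂)⁻¹ - c * (x + a₂)⁻¹ - c * ((x + a₁)⁻¹ - c * x⁻¹) = b := by
      have := hEq
      simp only [cDerivIter, List.foldl, cDeriv] at this
      rw [hinv _ hx0, hinv _ h1, hinv _ h2] at this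
      rw [show x + a₂ + a₁ = x + a₁ + a₂ by ring] at this
      rw [hinv _ h12] at this
      exact this
    have key : x * (x + a₁) * (x + a₂) - c * (x * (x + a₁) * (x + a₁ + a₂))
        - c * (x * (x + a₂) * (x + a₁ + a₂))
        + c ^ 2 * ((x + a₁) * (x + a₂) * (x + a₁ + a₂))
        = b * (x * (x + a₁) * (x + a₂) * (x + a₁ + a₂)) := by
      field_simp at hEq'
      linear_combination hEq'
    linear_combination key + (x * a₂ ^ 2 * c + x * a₁ * a₂ * c - x * a₁ * a₂ * c ^ 2
      + x * a₁ * a₂ ^ 2 * b + x * a₁ ^ 2 * c + x * a₁ ^ 2 * a₂ * b + 2 * x ^ 2 * a₂ * c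
      - x ^ 2 * a₂ * c ^ 2 + x ^ 2 * a₂ ^ 2 * b + 2 * x ^ 2 * a₁ * c - x ^ 2 * a₁ * c ^ 2
      + 2 * x ^ 2 * a₁ * a₂ * b + x ^ 2 * a₁ ^ 2 * b + x ^ 3 * c + x ^ 3 * a₂ * b
      + x ^ 3 * a₁ * b + x ^ 4 * b) * hchar
  have count : ∀ p : Polynomial K, p ≠ 0 →
      (∀ x : K, (x ∉ ({0, a₁, a₂, a₁ + a₂} : Set K) ∧
        cDerivIter c [a₁, a₂] (fun y => y ^ (2 ^ n - 2)) x = b) → p.IsRoot x) →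
      Nat.card {x : K // x ∉ ({0, a₁, a₂, a₁ + a₂} : Set K) ∧
        cDerivIter c [a₁, a₂] (fun y => y ^ (2 ^ n - 2)) x = b} ≤ p.natDegree := by
    intro p hp0 hroot
    have hsub : {x : K | x ∉ ({0, a₁, a₂, a₁ + a₂} : Set K) ∧
        cDerivIter c [a₁, a₂] (fun y => y ^ (2 ^ n - 2)) x = b} ⊆
        (p.roots.toFinset : Set K) := by
      intro x hx
      simp only [Finset.coe_sort_coe, Finset.mem_coe, Multiset.mem_toFinset,
        Polynomial.mem_roots hp0]
      exact hroot x hx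
    calc Nat.card {x : K // x ∉ ({0, a₁, a₂, a₁ + a₂} : Set K) ∧
          cDerivIter c [a₁, a₂] (fun y => y ^ (2 ^ n - 2)) x = b}
        = ({x : K | x ∉ ({0, a₁, a₂, a₁ + a₂} : Set K) ∧
          cDerivIter c [a₁, a₂] (fun y => y ^ (2 ^ n - 2)) x = b}).ncard :=
          Nat.card_coe_set_eq _
      _ ≤ ((p.roots.toFinset : Set K)).ncard := Set.ncard_le_ncard hsub (Set.toFinite _)
      _ = p.roots.toFinset.card := Set.ncard_coe_finset _
      _ ≤ Multiset.card p.roots := Multiset.toFinset_card_le _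
      _ ≤ p.natDegree := p.card_roots'
  refine ⟨main, ?_, ?_⟩
  · intro hb
    set p : Polynomial K := Polynomial.C b * Polynomial.X ^ 4
      + Polynomial.C (1 + c ^ 2) * Polynomial.X ^ 3
      + Polynomial.C (a₂ + c * a₂ + b * a₂ ^ 2 + a₁ + c * a₁ + b * a₁ ^ 2 + b * a₁ * a₂)
        * Polynomial.X ^ 2
      + Polynomial.C (a₁ * a₂ + c * a₂ ^ 2 + c ^ 2 * a₂ ^ 2 + c * a₁ ^ 2 + c ^ 2 * a₁ ^ 2
            + c ^ 2 * a₁ * a₂ + b * a₁ * a₂ ^ 2 + b * a₁ ^ 2 * a₂) * Polynomial.X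
      + Polynomial.C (c ^ 2 * a₁ * a₂ * (a₁ + a₂)) with hpdef
    have hp0 : p ≠ 0 := by
      intro h
      have h4 : p.coeff 4 = b := by
        rw [hpdef]
        simp only [Polynomial.coeff_add, Polynomial.coeff_C_mul, Polynomial.coeff_X_pow,
          Polynomial.coeff_C, Polynomial.coeff_X]
        norm_num
      rw [h] at h4
      exact hb (by simpa using h4.symm)
    have hdeg : p.natDegree ≤ 4 := by
      rw [hpdef]; compute_degree
    refine le_trans (count p hp0 ?_) hdeg
    intro x hx
    have := main x hx.1 hx.2
    simp only [hpdef, Polynomial.IsRoot, Polynomial.eval_add, Polynomial.eval_mul,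
      Polynomial.eval_pow, Polynomial.eval_C, Polynomial.eval_X]
    linear_combination this
  · intro hb
    subst hb
    have hc1' : 1 + c ^ 2 ≠ 0 := by
      have h : 1 + c ^ 2 = (1 + c) * (1 + c) := by linear_combination (-c) * hchar
      rw [h]
      have : (1 : K) + c ≠ 0 := by
        intro h0; apply hc1; linear_combination h0 - hchar
      exact mul_ne_zero this this
    set p : Polynomial K := Polynomial.C (1 + c ^ 2) * Polynomial.X ^ 3
      + Polynomial.C (a₂ + c * a₂ + a₁ + c * a₁) * Polynomial.X ^ 2
      + Polynomial.C (a₁ * a₂ + c * a₂ ^ 2 + c ^ 2 * a₂ ^ 2 + c * a₁ ^ 2 + c ^ 2 * a₁ ^ 2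
            + c ^ 2 * a₁ * a₂) * Polynomial.X
      + Polynomial.C (c ^ 2 * a₁ * a₂ * (a₁ + a₂)) with hpdef
    have hp0 : p ≠ 0 := by
      intro h
      have h3 : p.coeff 3 = 1 + c ^ 2 := by
        rw [hpdef]
        simp only [Polynomial.coeff_add, Polynomial.coeff_C_mul, Polynomial.coeff_X_pow,
          Polynomial.coeff_C, Polynomial.coeff_X]
        norm_num
      rw [h] at h3
      exact hc1' (by simpa using h3.symm)
    have hdeg : p.natDegree ≤ 3 := by
      rw [hpdef]; compute_degree
    refine le_trans (count p hp0 ?_) hdeg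
    intro x hx
    have := main x hx.1 hx.2
    simp only [hpdef, Polynomial.IsRoot, Polynomial.eval_add, Polynomial.eval_mul,
      Polynomial.eval_pow, Polynomial.eval_C, Polynomial.eval_X]
    linear_combination this
end

section
/- Let n >= 4 and F(x) = x^{2^n-2} on F_{2^n}. Then for any c in F_{2^n} with c != 1, the second-order c-differential uniformity of F is at most 6; that is, for all a_1, a_2, b in F_{2^n}, the equation _cD^{(2)}_{a_1,a_2}F(x) = b has at most 6 solutions x. -/
open Polynomial

private lemma natCard_le_of_roots {K : Type*} [Field K] {E : K → Prop}
    (q : K[X]) (hq : q ≠ 0) (hd : q.natDegree ≤ 6)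
    (h : ∀ x, E x → q.eval x = 0) :
    Nat.card {x : K // E x} ≤ 6 := by
  classical
  have hsub : {x : K | E x} ⊆ (q.roots.toFinset : Set K) := by
    intro x hx
    simp only [Finset.coe_sort_coe, Multiset.mem_toFinset, Finset.mem_coe]
    rw [Polynomial.mem_roots']
    exact ⟨hq, h x hx⟩
  calc Nat.card {x : K // E x} = Set.ncard {x : K | E x} :=
        (Nat.card_coe_set_eq _)
    _ ≤ (q.roots.toFinset : Finset K).card := by
        rw [← Set.ncard_coe_finset]
        exact Set.ncard_le_ncard hsub (Finset.finite_toSet _)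
    _ ≤ Multiset.card q.roots := Multiset.toFinset_card_le _
    _ ≤ q.natDegree := q.card_roots'
    _ ≤ 6 := hd

private lemma main_aux {K : Type*} [Field K] (hchar : CharP K 2)
    (c : K) (hc : c ≠ 1) (a₁ a₂ b : K) :
    Nat.card {x : K //
      (x + (a₁ + a₂))⁻¹ - c * (x + a₂)⁻¹ - c * (x + a₁)⁻¹ + c ^ 2 * x⁻¹ = b} ≤ 6 := by
  classical
  haveI := hchar
  set s : K := a₁ + a₂ with hs_def
  set E : K → Prop := fun x =>
      (x + s)⁻¹ - c * (x + a₂)⁻¹ - c * (x + a₁)⁻¹ + c ^ 2 * x⁻¹ = b with hE_def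
  have h2 : ∀ y : K, y + y = 0 := fun y => CharTwo.add_self_eq_zero y
  have h2c : (2 : K) = 0 := by have := h2 (1 : K); linear_combination this
  have hss : a₁ + a₂ + s = 0 := by rw [hs_def]; exact h2 _
  have hneg : ∀ y : K, -y = y := fun y => CharTwo.neg_eq y
  have h1c : (1 : K) + c ≠ 0 := by
    intro h; exact hc (by linear_combination h - h2c)
  have hc2 : ∀ u : K, 1 - c ^ 2 = 0 → False := by
    intro u h
    have h3 : (c - 1) ^ 2 = 0 := by linear_combination (-1 : K) * h + (1 - c) * h2c
    exact hc (by linear_combination pow_eq_zero_iff (n := 2) (by norm_num) |>.mp h3)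
  -- the cleared-denominator polynomial
  set k4 : K := -b with hk4_def
  set k3 : K := 1 - 2*c + c^2 - b*(a₁+a₂+s) with hk3_def
  set k2 : K := a₁ + a₂ + c^2*(a₁+a₂+s) - c*(a₁+a₂+2*s) - b*(a₁*s + a₂*s + a₁*a₂) with hk2_def
  set k1 : K := a₁*a₂ + c^2*(a₁*a₂ + a₁*s + a₂*s) - c*(a₁*s + a₂*s) - b*(a₁*a₂*s) with hk1_def
  set k0 : K := c^2*a₁*a₂*s with hk0_def
  set P : K[X] := C k4 * X^4 + C k3 * X^3 + C k2 * X^2 + C k1 * X + C k0 with hP_def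
  have hPeval : ∀ x : K, P.eval x = k4*x^4 + k3*x^3 + k2*x^2 + k1*x + k0 := by
    intro x; rw [hP_def]; simp
  have hk3' : k3 = (1 + c) ^ 2 := by
    rw [hk3_def]; linear_combination (-b) * hss + (-2*c) * h2c
  have hPne : P ≠ 0 := by
    intro h
    have h3 : P.coeff 3 = 0 := by rw [h]; simp
    rw [hP_def] at h3
    simp [coeff_X, coeff_C, Polynomial.coeff_X_pow] at h3
    exact pow_ne_zero 2 h1c (by rw [← hk3']; exact h3)
  have hPdeg : P.natDegree ≤ 4 := by
    rw [hP_def]; compute_degree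
  -- special point incompatibilities
  have hL1 : s ≠ 0 → E 0 → E s → False := by
    intro hs0 h0 hsE
    rw [hE_def] at h0 hsE
    simp only [zero_add, inv_zero, mul_zero, add_zero] at h0
    rw [show s + s = (0:K) from h2 s,
        show s + a₂ = a₁ from by rw [hs_def]; linear_combination h2 a₂,
        show s + a₁ = a₂ from by rw [hs_def]; linear_combination h2 a₁,
        inv_zero] at hsE
    have hmul : (1 - c ^ 2) * s⁻¹ = 0 := by linear_combination h0 - hsE
    rcases mul_eq_zero.1 hmul with h | h
    · exact hc2 0 h
    · exact inv_ne_zero hs0 h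
  have hL2 : a₁ ≠ a₂ → E a₁ → E a₂ → False := by
    intro hne hA hB
    rw [hE_def] at hA hB
    rw [show a₁ + s = a₂ from by rw [hs_def]; linear_combination h2 a₁,
        show a₁ + a₂ = s from hs_def.symm,
        show a₁ + a₁ = (0:K) from h2 a₁, inv_zero] at hA
    rw [show a₂ + s = a₁ from by rw [hs_def]; linear_combination h2 a₂,
        show a₂ + a₂ = (0:K) from h2 a₂,
        show a₂ + a₁ = s from by rw [hs_def]; ring, inv_zero] at hB
    have hmul : (1 - c ^ 2) * (a₂⁻¹ - a₁⁻¹) = 0 := by linear_combination hA - hB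
    rcases mul_eq_zero.1 hmul with h | h
    · exact hc2 0 h
    · exact hne (inv_injective (sub_eq_zero.mp h)).symm
  -- covering polynomial
  set u : K := if E 0 then 0 else s with hu_def
  set v : K := if E a₁ then a₁ else a₂ with hv_def
  set q : K[X] := P * (X - C u) * (X - C v) with hq_def
  have hqne : q ≠ 0 := by
    rw [hq_def]
    exact mul_ne_zero (mul_ne_zero hPne (X_sub_C_ne_zero u)) (X_sub_C_ne_zero v)
  have hqdeg : q.natDegree ≤ 6 := by
    rw [hq_def]
    calc (P * (X - C u) * (X - C v)).natDegree
        ≤ (P * (X - C u)).natDegree + (X - C v).natDegree := natDegree_mul_le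
      _ ≤ P.natDegree + (X - C u).natDegree + (X - C v).natDegree := by
          gcongr; exact natDegree_mul_le
      _ ≤ 4 + 1 + 1 := by
          rw [natDegree_X_sub_C, natDegree_X_sub_C]; omega
      _ ≤ 6 := by norm_num
  have hqeval : ∀ x : K, q.eval x = P.eval x * (x - u) * (x - v) := by
    intro x; rw [hq_def]; simp
  have hcover : ∀ x : K, E x → q.eval x = 0
  · intro x hx
    rw [hqeval]
    by_cases hx0 : x = 0
    · have hu : u = x := by rw [hu_def, if_pos (hx0 ▸ hx), hx0]
      rw [hu, sub_self, mul_zero, zero_mul]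
    · by_cases hxs : x = s
      · by_cases h0 : E 0
        · exact ((hL1 (fun h => hx0 (hxs.trans h)) h0 (hxs ▸ hx)).elim)
        · have hu : u = x := by rw [hu_def, if_neg h0, hxs]
          rw [hu, sub_self, mul_zero, zero_mul]
      · by_cases hx1 : x = a₁
        · have hv : v = x := by rw [hv_def, if_pos (hx1 ▸ hx), hx1]
          rw [hv, sub_self, mul_zero]
        · by_cases hx2 : x = a₂
          · by_cases hA : E a₁
            · by_cases h12 : a₁ = a₂
              · have hv : v = x := by rw [hv_def, if_pos hA, h12, hx2]
                rw [hv, sub_self, mul_zero]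
              · exact ((hL2 h12 hA (hx2 ▸ hx)).elim)
            · have hv : v = x := by rw [hv_def, if_neg hA, hx2]
              rw [hv, sub_self, mul_zero]
          · -- generic case
            have d0 : x ≠ 0 := hx0
            have d1 : x + a₁ ≠ 0 := by
              intro h; exact hx1 (by linear_combination h - h2 a₁)
            have d2 : x + a₂ ≠ 0 := by
              intro h; exact hx2 (by linear_combination h - h2 a₂)
            have ds : x + s ≠ 0 := by
              intro h; exact hxs (by linear_combination h - h2 s)
            rw [hE_def] at hx
            have hPx : P.eval x = 0 := by
              rw [hPeval, hk4_def, hk3_def, hk2_def, hk1_def, hk0_def]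
              field_simp at hx
              linear_combination hx
            rw [hPx, zero_mul, zero_mul]
  exact natCard_le_of_roots q hqne hqdeg hcover

theorem stmt15 (n : ℕ) (hn : 4 ≤ n)
    (K : Type*) [Field K] [Fintype K] (hK : Fintype.card K = 2 ^ n)
    (c : K) (hc : c ≠ 1) :
    ∀ a₁ a₂ b : K,
      Nat.card {x : K // cDerivIter c [a₁, a₂] (fun y => y ^ (2 ^ n - 2)) x = b} ≤ 6 := by
  intro a₁ a₂ b
  classical
  -- characteristic 2
  have hp : CharP K (ringChar K) := ringChar.charP K
  have hprime : (ringChar K).Prime := CharP.char_is_prime K (ringChar K)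
  obtain ⟨m, hm⟩ := FiniteField.card K (ringChar K)
  have hchar2 : ringChar K = 2 := by
    have hdvd : ringChar K ∣ 2 ^ n := by
      rw [← hK, hm.2]
      exact dvd_pow_self _ (by positivity)
    have h2' := hprime.dvd_of_dvd_pow (n := n) (by simpa using hdvd)
    exact (Nat.prime_dvd_prime_iff_eq hprime Nat.prime_two).mp h2'
  have hchar : CharP K 2 := hchar2 ▸ hp
  have h16 : 16 ≤ 2 ^ n := by
    calc (16 : ℕ) = 2 ^ 4 := by norm_num
      _ ≤ 2 ^ n := Nat.pow_le_pow_right (by norm_num) hn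
  have hF : ∀ y : K, y ^ (2 ^ n - 2) = y⁻¹ := by
    intro y
    rcases eq_or_ne y 0 with rfl | hy
    · rw [zero_pow (by omega), inv_zero]
    · have h1 : y ^ (2 ^ n - 1) = 1 := by
        have := FiniteField.pow_card_sub_one_eq_one y hy
        rwa [hK] at this
      have hm : y * y ^ (2 ^ n - 2) = 1 := by
        calc y * y ^ (2 ^ n - 2) = y ^ (2 ^ n - 2 + 1) := (pow_succ' y _).symm
          _ = y ^ (2 ^ n - 1) := by congr 1; omega
          _ = 1 := h1
      exact (inv_eq_of_mul_eq_one_right hm).symm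
  have hEiff : ∀ x : K,
      (cDerivIter c [a₁, a₂] (fun y => y ^ (2 ^ n - 2)) x = b) ↔
      ((x + (a₁ + a₂))⁻¹ - c * (x + a₂)⁻¹ - c * (x + a₁)⁻¹ + c ^ 2 * x⁻¹ = b) := by
    intro x
    simp only [cDerivIter, List.foldl, cDeriv, hF]
    rw [show x + a₂ + a₁ = x + (a₁ + a₂) by ring]
    constructor <;> intro h <;> linear_combination h
  refine le_trans (le_of_eq (Nat.card_congr (Equiv.subtypeEquivRight hEiff))) ?_
  exact main_aux hchar c hc a₁ a₂ b
end

section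
/- Let q = p^h and F : F_{p^n} -> F_{p^n} be a quadratic function of the form F(x) = sum_{i,j} c_{i,j} x^{q^i + q^j} + sum_l c_l x^{p^l}. Then for any c in F_{p^{gcd(n,h)}} with c != 1, the first c-derivative satisfies _cD_a F(x) = (1-c) F(x + a/(1-c)) + beta, where beta = F(a) - (1-c) F(a/(1-c)). -/
theorem stmt16 (p n h : ℕ) (hp : p.Prime) (hn : 0 < n) (hh : 0 < h)
    (K : Type*) [Field K] [Fintype K] (hK : Fintype.card K = p ^ n)
    (s : Finset (ℕ × ℕ)) (coef : ℕ × ℕ → K) (s' : Finset ℕ) (coef' : ℕ → K)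
    (F : K → K)
    (hF : ∀ x : K, F x = ∑ ij ∈ s, coef ij * x ^ (p ^ h) ^ ij.1 * x ^ (p ^ h) ^ ij.2
        + ∑ l ∈ s', coef' l * x ^ p ^ l)
    (c : K) (hcsub : c ^ p ^ Nat.gcd n h = c) (hc : c ≠ 1) :
    ∀ (a : K) (x : K), cDeriv c a F x
      = (1 - c) * F (x + a / (1 - c)) + (F a - (1 - c) * F (a / (1 - c))) := by
  -- characteristic
  haveI hpf : Fact p.Prime := ⟨hp⟩
  haveI hchar : CharP K p := by
    obtain ⟨m, hrp, hcard⟩ := FiniteField.card K (ringChar K)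
    have hpn : p ^ n = (ringChar K) ^ (m : ℕ) := by rw [← hK, hcard]
    have hdvd : p ∣ (ringChar K) ^ (m : ℕ) := by
      rw [← hpn]; exact dvd_pow_self p hn.ne'
    have : p = ringChar K := ((Nat.prime_dvd_prime_iff_eq hp hrp).mp
      (hp.dvd_of_dvd_pow hdvd))
    rw [this]; exact ringChar.charP K
  have hc1 : (1 : K) - c ≠ 0 := sub_ne_zero.mpr fun h' => hc h'.symm
  -- c is fixed by Frobenius powers p^(gcd * k)
  have hc0 : ∀ m : ℕ, c ^ p ^ (Nat.gcd n h * m) = c := by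
    intro m
    induction m with
    | zero => simp
    | succ m ih =>
      rw [Nat.mul_succ, pow_add, pow_mul, ih, hcsub]
  have hcq : ∀ j : ℕ, c ^ p ^ (h * j) = c := by
    intro j
    have : h * j = Nat.gcd n h * (h / Nat.gcd n h * j) := by
      rw [← mul_assoc, Nat.mul_div_cancel' (Nat.gcd_dvd_right n h)]
    rw [this, hc0]
  have h1c : ∀ j : ℕ, ((1 : K) - c) ^ (p ^ h) ^ j = 1 - c := by
    intro j
    rw [← pow_mul, sub_pow_char_pow, one_pow, hcq]
  intro a x
  have hb : ∀ j : ℕ, (1 - c) * (a / (1 - c)) ^ (p ^ h) ^ j = a ^ (p ^ h) ^ j := by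
    intro j
    rw [div_pow, h1c, mul_div_cancel₀ _ hc1]
  have frob : ∀ (y z : K) (e : ℕ), (y + z) ^ (p ^ h) ^ e
      = y ^ (p ^ h) ^ e + z ^ (p ^ h) ^ e := by
    intro y z e
    rw [← pow_mul, add_pow_char_pow, pow_mul]
  have frob' : ∀ (y z : K) (e : ℕ), (y + z) ^ p ^ e = y ^ p ^ e + z ^ p ^ e := by
    intro y z e
    exact add_pow_char_pow _ _ _ _
  show F (x + a) - c * F x
      = (1 - c) * F (x + a / (1 - c)) + (F a - (1 - c) * F (a / (1 - c)))
  rw [hF (x + a), hF x, hF (x + a / (1 - c)), hF a, hF (a / (1 - c))]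
  simp only [mul_add, Finset.mul_sum]
  rw [add_sub_add_comm, add_sub_add_comm, add_add_add_comm]
  simp only [← Finset.sum_sub_distrib]
  simp only [← Finset.sum_add_distrib]
  congr 1
  · refine Finset.sum_congr rfl fun ij _ => ?_
    have hbi := hb ij.1
    have hbj := hb ij.2
    rw [frob x a ij.1, frob x a ij.2, frob x (a / (1 - c)) ij.1,
      frob x (a / (1 - c)) ij.2]
    linear_combination (coef ij * x ^ (p ^ h) ^ ij.1) * hbj.symm
      + (coef ij * x ^ (p ^ h) ^ ij.2) * hbi.symm
  · refine Finset.sum_congr rfl fun l _ => ?_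
    rw [frob' x a l, frob' x (a / (1 - c)) l]
    ring
end

section
/- Let q = p^h and F : F_{p^n} -> F_{p^n} be quadratic of the form sum_{i,j} c_{i,j} x^{q^i+q^j} + sum_l c_l x^{p^l}, and let delta = max over b in F_{p^n} of |F^{-1}(b)|. Then for any c in F_{p^{gcd(n,h)}} with c != 1 and any t >= 1, the t-order c-differential uniformity of F equals delta; in fact _cD^{(t)}_{a_1,...,a_t}F(x) = (1-c)^t F(x + (a_1+...+a_t)/(1-c)) + beta' for some constant beta' depending only on a_1,...,a_t and c. -/
/-!
Put `u = 1 - c`. Since `u` lies in `𝔽_{p^gcd(n,h)}`, it is fixed by every `x ↦ x ^ (p ^ h) ^ i`,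
so the polarization `B(x, y) = F(x + y) - F(x) - F(y)` of `F` satisfies `B(x, u y) = u B(x, y)`.
Comparing `F(x + a) = F x + F a + B(x, a)` with `u F(x + a / u) = u F x + u F (a / u) + B(x, a)`
gives `F(x + a) - c F(x) = u F(x + a / u) + β`, and iterating gives the closed form of the
`t`-th derivative. The fibres of `x ↦ u ^ t F(x + e) + β'` are translates of fibres of `F`, and
the directions `a₁ = ⋯ = aₜ = 0` realize every fibre size of `F`.
-/

open Finset

theorem pow_pow_eq_self_of_dvd {M : Type*} [Monoid M] {x : M} {k g e : ℕ}
    (hx : x ^ k ^ g = x) (hge : g ∣ e) : x ^ k ^ e = x := by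
  obtain ⟨m, rfl⟩ := hge
  have := Function.IsFixedPt.iterate (f := (· ^ k ^ g)) hx m
  rwa [pow_iterate, Function.IsFixedPt, ← pow_mul] at this

section Polarization

variable {K : Type*} [CommRing K] {p : ℕ} [ExpChar K p]

theorem add_pow_pow_expChar_pow (h i : ℕ) (x y : K) :
    (x + y) ^ (p ^ h) ^ i = x ^ (p ^ h) ^ i + y ^ (p ^ h) ^ i := by
  rw [← pow_mul, add_pow_expChar_pow]

theorem exists_polarization_of_eq_sum {h : ℕ} {s : Finset (ℕ × ℕ)} {coef : ℕ × ℕ → K}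
    {s' : Finset ℕ} {coef' : ℕ → K} {F : K → K}
    (hF : ∀ x : K, F x = ∑ ij ∈ s, coef ij * x ^ (p ^ h) ^ ij.1 * x ^ (p ^ h) ^ ij.2
        + ∑ l ∈ s', coef' l * x ^ p ^ l)
    {u : K} (hu : u ^ p ^ h = u) :
    ∃ B : K → K → K, (∀ x y, F (x + y) = F x + F y + B x y) ∧
      ∀ x y, B x (u * y) = u * B x y := by
  have hu_pow (i : ℕ) : u ^ (p ^ h) ^ i = u := by
    rw [← pow_mul]; exact pow_pow_eq_self_of_dvd hu (dvd_mul_right h i)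
  refine ⟨fun x y => ∑ ij ∈ s, coef ij *
      (x ^ (p ^ h) ^ ij.1 * y ^ (p ^ h) ^ ij.2 + y ^ (p ^ h) ^ ij.1 * x ^ (p ^ h) ^ ij.2),
    fun x y => ?_, fun x y => ?_⟩
  · have hquad : ∑ ij ∈ s, coef ij * (x + y) ^ (p ^ h) ^ ij.1 * (x + y) ^ (p ^ h) ^ ij.2
        = ∑ ij ∈ s, coef ij * x ^ (p ^ h) ^ ij.1 * x ^ (p ^ h) ^ ij.2
          + ∑ ij ∈ s, coef ij * y ^ (p ^ h) ^ ij.1 * y ^ (p ^ h) ^ ij.2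
          + ∑ ij ∈ s, coef ij * (x ^ (p ^ h) ^ ij.1 * y ^ (p ^ h) ^ ij.2
              + y ^ (p ^ h) ^ ij.1 * x ^ (p ^ h) ^ ij.2) := by
      rw [← sum_add_distrib, ← sum_add_distrib]
      refine sum_congr rfl fun ij _ => ?_
      rw [add_pow_pow_expChar_pow, add_pow_pow_expChar_pow]
      ring
    have hlin : ∑ l ∈ s', coef' l * (x + y) ^ p ^ l
        = ∑ l ∈ s', coef' l * x ^ p ^ l + ∑ l ∈ s', coef' l * y ^ p ^ l := by
      simp only [add_pow_expChar_pow, mul_add, sum_add_distrib]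
    rw [hF, hF, hF, hquad, hlin]
    ring
  · rw [mul_sum]
    refine sum_congr rfl fun ij _ => ?_
    rw [mul_pow, mul_pow, hu_pow, hu_pow]
    ring

end Polarization

section HigherDerivative

variable {K : Type*} [Field K] {c : K} {F : K → K}

theorem cDeriv_eq_shift_add_const (hc : c ≠ 1) {B : K → K → K}
    (hFB : ∀ x y, F (x + y) = F x + F y + B x y)
    (hB : ∀ x y, B x ((1 - c) * y) = (1 - c) * B x y) (a x : K) :
    cDeriv c a F x = (1 - c) * F (x + a / (1 - c)) + (F a - (1 - c) * F (a / (1 - c))) := by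
  have hBa : B x a = (1 - c) * B x (a / (1 - c)) := by
    rw [← hB, mul_div_cancel₀ _ (sub_ne_zero.2 hc.symm)]
  rw [cDeriv, hFB x a, hFB x (a / (1 - c)), hBa]
  ring

theorem cDerivIter_append_singleton (as : List K) (a : K) (x : K) :
    cDerivIter c (as ++ [a]) F x = cDerivIter c as F (x + a) - c * cDerivIter c as F x := by
  simp [cDerivIter, cDeriv, List.foldl_append]

theorem cDerivIter_eq_shift_add_const
    (hF : ∀ a, ∃ β, ∀ x, cDeriv c a F x = (1 - c) * F (x + a / (1 - c)) + β) (as : List K) :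
    ∃ β, ∀ x, cDerivIter c as F x = (1 - c) ^ as.length * F (x + as.sum / (1 - c)) + β := by
  induction as using List.reverseRecOn with
  | nil => exact ⟨0, fun x => by simp [cDerivIter]⟩
  | append_singleton as a ih =>
    obtain ⟨β, hβ⟩ := ih
    obtain ⟨γ, hγ⟩ := hF a
    refine ⟨(1 - c) ^ as.length * γ + (1 - c) * β, fun x => ?_⟩
    have hstep := hγ (x + as.sum / (1 - c))
    rw [cDeriv, add_right_comm] at hstep
    have hshift : x + (as ++ [a]).sum / (1 - c) = x + as.sum / (1 - c) + a / (1 - c) := by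
      rw [List.sum_append, List.sum_singleton, add_div, add_assoc]
    rw [cDerivIter_append_singleton, hβ, hβ, hshift, List.length_append, List.length_singleton]
    linear_combination (1 - c) ^ as.length * hstep

end HigherDerivative

theorem range_card_fiber_eq_of_eq_affine {K : Type*} [Field K] {F G : K → K} {lam e β : K}
    (hlam : lam ≠ 0) (hG : ∀ x, G x = lam * F (x + e) + β) :
    Set.range (fun b => Nat.card {x // G x = b}) = Set.range (fun b => Nat.card {x // F x = b}) := by
  have hfiber (b : K) : Nat.card {x // G x = b} = Nat.card {y // F y = (b - β) / lam} :=
    Nat.card_congr <| Equiv.subtypeEquiv (Equiv.addRight e) fun x => by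
      rw [hG, Equiv.coe_addRight, eq_div_iff hlam]
      constructor <;> intro h <;> linear_combination h
  have hsurj : Function.Surjective fun b : K => (b - β) / lam :=
    fun y => ⟨lam * y + β, by field_simp; ring⟩
  calc Set.range (fun b => Nat.card {x // G x = b})
      = Set.range ((fun y => Nat.card {x // F x = y}) ∘ fun b => (b - β) / lam) :=
        congrArg Set.range (funext hfiber)
    _ = _ := hsurj.range_comp _

theorem stmt17_general (p n h : ℕ) (hp : p.Prime)
    (K : Type*) [Field K] [Fintype K] (hK : Fintype.card K = p ^ n)
    (s : Finset (ℕ × ℕ)) (coef : ℕ × ℕ → K) (s' : Finset ℕ) (coef' : ℕ → K)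
    (F : K → K)
    (hF : ∀ x : K, F x = ∑ ij ∈ s, coef ij * x ^ (p ^ h) ^ ij.1 * x ^ (p ^ h) ^ ij.2
        + ∑ l ∈ s', coef' l * x ^ p ^ l)
    (c : K) (hcsub : c ^ p ^ Nat.gcd n h = c) (hc : c ≠ 1)
    (t : ℕ) :
    (∀ as : List K, as.length = t → ∃ β' : K, ∀ x : K,
        cDerivIter c as F x = (1 - c) ^ t * F (x + as.sum / (1 - c)) + β') ∧
    sSup {N : ℕ | ∃ (as : List K) (b : K), as.length = t ∧
        Nat.card {x : K // cDerivIter c as F x = b} = N}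
      = sSup {N : ℕ | ∃ b : K, Nat.card {x : K // F x = b} = N} := by
  have : Fact p.Prime := ⟨hp⟩
  have : CharP K p := charP_of_card_eq_prime_pow hK
  have hu : (1 - c) ^ p ^ h = 1 - c := by
    rw [sub_pow_char_pow, one_pow, pow_pow_eq_self_of_dvd hcsub (Nat.gcd_dvd_right n h)]
  obtain ⟨B, hFB, hB⟩ := exists_polarization_of_eq_sum hF hu
  have hiter := cDerivIter_eq_shift_add_const
    fun a => ⟨_, cDeriv_eq_shift_add_const hc hFB hB a⟩
  have hu_pow : (1 - c) ^ t ≠ 0 := pow_ne_zero t (sub_ne_zero.2 hc.symm)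
  refine ⟨fun as hlen => hlen ▸ hiter as, congrArg sSup (Set.ext fun N => ⟨?_, ?_⟩)⟩
  · rintro ⟨as, b, rfl, rfl⟩
    obtain ⟨β, hβ⟩ := hiter as
    exact (range_card_fiber_eq_of_eq_affine hu_pow hβ ▸ Set.mem_range_self b :
      _ ∈ Set.range fun b => Nat.card {x // F x = b})
  · rintro ⟨b, rfl⟩
    obtain ⟨β, hβ⟩ := hiter (List.replicate t 0)
    rw [List.length_replicate] at hβ
    obtain ⟨b', hb'⟩ := (range_card_fiber_eq_of_eq_affine hu_pow hβ).symm ▸ Set.mem_range_self b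
    exact ⟨_, b', List.length_replicate, hb'⟩

theorem stmt17 (p n h : ℕ) (hp : p.Prime) (hn : 0 < n) (hh : 0 < h)
    (K : Type*) [Field K] [Fintype K] (hK : Fintype.card K = p ^ n)
    (s : Finset (ℕ × ℕ)) (coef : ℕ × ℕ → K) (s' : Finset ℕ) (coef' : ℕ → K)
    (F : K → K)
    (hF : ∀ x : K, F x = ∑ ij ∈ s, coef ij * x ^ (p ^ h) ^ ij.1 * x ^ (p ^ h) ^ ij.2
        + ∑ l ∈ s', coef' l * x ^ p ^ l)
    (c : K) (hcsub : c ^ p ^ Nat.gcd n h = c) (hc : c ≠ 1)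
    (t : ℕ) (ht : 1 ≤ t) :
    (∀ as : List K, as.length = t → ∃ β' : K, ∀ x : K,
        cDerivIter c as F x = (1 - c) ^ t * F (x + as.sum / (1 - c)) + β') ∧
    sSup {N : ℕ | ∃ (as : List K) (b : K), as.length = t ∧
        Nat.card {x : K // cDerivIter c as F x = b} = N}
      = sSup {N : ℕ | ∃ b : K, Nat.card {x : K // F x = b} = N} :=
  stmt17_general p n h hp K hK s coef s' coef' F hF c hcsub hc t
end

section
/- Let F(x) = x^{p^k+1} on F_{p^n}, and let c in F_{p^{gcd(k,n)}} with c != 1. Then for any t >= 1, the maximum over a_1,...,a_t, b in F_{p^n} of the number of solutions x of _cD^{(t)}_{a_1,...,a_t}F(x) = b equals gcd(p^k+1, p^n-1). -/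
/-!
With `q = p ^ k`, the map `x ↦ x ^ q` is additive and fixes `c`, so completing the
"square" gives `(y + a) ^ (q + 1) - c y ^ (q + 1) = (1 - c) (y + a / (1 - c)) ^ (q + 1) + const`.
Hence every higher `c`-derivative of the Gold function is `l (x + e) ^ (q + 1) + μ` with `l ≠ 0`,
and its fibres are translates of those of `z ↦ z ^ (q + 1)`. In the cyclic group `Kˣ` the
equation `z ^ m = d` has at most `gcd m (|K| - 1)` solutions, with equality for `d = 1`.
-/

section ShiftedPow

variable {K : Type*} [Field K]

def IsShiftedPow (m : ℕ) (F : K → K) : Prop :=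
  ∃ l ≠ 0, ∃ e μ : K, ∀ x, F x = l * (x + e) ^ m + μ

lemma isShiftedPow_pow (m : ℕ) : IsShiftedPow m (fun x : K => x ^ m) :=
  ⟨1, one_ne_zero, 0, 0, fun x => by simp⟩

lemma card_affine_pow_fiber {m : ℕ} {l : K} (hl : l ≠ 0) (e μ b : K) :
    Nat.card {x : K // l * (x + e) ^ m + μ = b} = Nat.card {z : K // z ^ m = (b - μ) / l} :=
  Nat.card_congr <| Equiv.subtypeEquiv (Equiv.addRight e) fun x => by
    rw [Equiv.coe_addRight, eq_div_iff hl]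
    constructor <;> intro h <;> linear_combination h

variable {q : ℕ} {c : K} (hq : ∀ a b : K, (a + b) ^ q = a ^ q + b ^ q)
  (hcq : (1 - c) ^ q = 1 - c) (hc : c ≠ 1)
include hq hcq hc

lemma add_pow_succ_sub_mul_pow (y a : K) :
    (y + a) ^ (q + 1) - c * y ^ (q + 1)
      = (1 - c) * (y + a / (1 - c)) ^ (q + 1) + (1 - (1 - c)⁻¹) * a ^ (q + 1) := by
  have hs : 1 - c ≠ 0 := sub_ne_zero.2 hc.symm
  rw [pow_succ, pow_succ, pow_succ, pow_succ, hq, hq, div_pow, hcq]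
  field_simp
  ring

lemma IsShiftedPow.cDeriv {F : K → K} (hF : IsShiftedPow (q + 1) F) (a : K) :
    IsShiftedPow (q + 1) (cDeriv c a F) := by
  obtain ⟨l, hl, e, μ, hF⟩ := hF
  refine ⟨l * (1 - c), mul_ne_zero hl (sub_ne_zero.2 hc.symm), e + a / (1 - c),
    l * (1 - (1 - c)⁻¹) * a ^ (q + 1) + (1 - c) * μ, fun x => ?_⟩
  have key := add_pow_succ_sub_mul_pow hq hcq hc (x + e) a
  rw [_root_.cDeriv, hF, hF, show x + a + e = x + e + a by ring, ← add_assoc]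
  linear_combination l * key

lemma IsShiftedPow.cDerivIter (as : List K) {F : K → K} (hF : IsShiftedPow (q + 1) F) :
    IsShiftedPow (q + 1) (cDerivIter c as F) := by
  induction as generalizing F with
  | nil => exact hF
  | cons a as ih => exact ih (hF.cDeriv hq hcq hc a)

end ShiftedPow

section Counting

variable {K : Type*} [Field K] [Finite K] {m : ℕ} [NeZero m]

lemma card_pow_eq_one :
    Nat.card {z : K // z ^ m = 1} = m.gcd (Nat.card K - 1) := calc
  Nat.card {z : K // z ^ m = 1} = Nat.card (rootsOfUnity m K) :=
    Nat.card_congr ((rootsOfUnityEquivNthRoots K m).trans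
      (Equiv.subtypeEquivRight fun z => Polynomial.mem_nthRoots (NeZero.pos m))).symm
  _ = Nat.card (powMonoidHom m : Kˣ →* Kˣ).ker := by rw [rootsOfUnity_eq_ker]
  _ = (Nat.card Kˣ).gcd m := IsCyclic.card_powMonoidHom_ker (G := Kˣ) m
  _ = m.gcd (Nat.card K - 1) := by
    rw [Nat.card_units, Nat.gcd_comm]

lemma card_pow_eq_le (d : K) :
    Nat.card {z : K // z ^ m = d} ≤ m.gcd (Nat.card K - 1) := by
  rcases isEmpty_or_nonempty {z : K // z ^ m = d} with _ | ⟨z₀, hz₀⟩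
  · simp
  by_cases h0 : z₀ = 0
  · have : Subsingleton {z : K // z ^ m = d} := ⟨fun ⟨x, hx⟩ ⟨y, hy⟩ => by
      subst h0
      rw [zero_pow (NeZero.ne m)] at hz₀
      rw [← hz₀, pow_eq_zero_iff (NeZero.ne m)] at hx hy
      simp [hx, hy]⟩
    exact (Finite.card_le_one_iff_subsingleton.2 this).trans
      (Nat.gcd_pos_of_pos_left _ (NeZero.pos m))
  have hd : d ≠ 0 := hz₀ ▸ pow_ne_zero m h0
  let divByZ₀ : {z : K // z ^ m = d} → {w : K // w ^ m = 1} := fun z =>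
    ⟨z / z₀, by rw [div_pow, z.2, hz₀, div_self hd]⟩
  have hinj : Function.Injective divByZ₀ := fun x y hxy =>
    Subtype.ext ((div_left_inj' h0).1 (congrArg Subtype.val hxy))
  exact (Nat.card_le_card_of_injective divByZ₀ hinj).trans card_pow_eq_one.le

lemma IsShiftedPow.card_fiber_le {F : K → K} (hF : IsShiftedPow m F) (b : K) :
    Nat.card {x : K // F x = b} ≤ m.gcd (Nat.card K - 1) := by
  obtain ⟨l, hl, e, μ, hF⟩ := hF
  simp_rw [hF]
  rw [card_affine_pow_fiber hl]
  exact card_pow_eq_le _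

lemma IsShiftedPow.exists_card_fiber_eq {F : K → K} (hF : IsShiftedPow m F) :
    ∃ b, Nat.card {x : K // F x = b} = m.gcd (Nat.card K - 1) := by
  obtain ⟨l, hl, e, μ, hF⟩ := hF
  refine ⟨l + μ, ?_⟩
  simp_rw [hF]
  rw [card_affine_pow_fiber hl, add_sub_cancel_right, div_self hl]
  exact card_pow_eq_one

end Counting

theorem stmt19_general (p n k : ℕ) (hp : p.Prime)
    (K : Type*) [Field K] [Fintype K] (hK : Fintype.card K = p ^ n)
    (c : K) (hcsub : c ^ p ^ Nat.gcd k n = c) (hc : c ≠ 1)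
    (t : ℕ) :
    (∀ as : List K, as.length = t → ∀ b : K,
      Nat.card {x : K // cDerivIter c as (fun y => y ^ (p ^ k + 1)) x = b}
        ≤ Nat.gcd (p ^ k + 1) (p ^ n - 1)) ∧
    (∃ as : List K, as.length = t ∧ ∃ b : K,
      Nat.card {x : K // cDerivIter c as (fun y => y ^ (p ^ k + 1)) x = b}
        = Nat.gcd (p ^ k + 1) (p ^ n - 1)) := by
  have := Fact.mk hp
  have := charP_of_card_eq_prime_pow hK
  have hck : c ^ p ^ k = c := by
    obtain ⟨r, hr⟩ := Nat.gcd_dvd_left k n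
    have := Function.iterate_fixed (f := (· ^ p ^ Nat.gcd k n)) hcsub r
    rwa [pow_iterate, ← pow_mul, ← hr] at this
  have hcq : (1 - c) ^ p ^ k = 1 - c := by rw [sub_pow_char_pow, one_pow, hck]
  have hgold (as : List K) : IsShiftedPow (p ^ k + 1) (cDerivIter c as fun y => y ^ (p ^ k + 1)) :=
    (isShiftedPow_pow _).cDerivIter (fun a b => add_pow_char_pow a b p k) hcq hc as
  rw [← hK, ← Nat.card_eq_fintype_card]
  exact ⟨fun as _ b => (hgold as).card_fiber_le b,
    List.replicate t 0, List.length_replicate, (hgold _).exists_card_fiber_eq⟩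

theorem stmt19 (p n k : ℕ) (hp : p.Prime) (hk : 1 ≤ k) (hkn : k < n)
    (K : Type*) [Field K] [Fintype K] (hK : Fintype.card K = p ^ n)
    (c : K) (hcsub : c ^ p ^ Nat.gcd k n = c) (hc : c ≠ 1)
    (t : ℕ) (ht : 1 ≤ t) :
    (∀ as : List K, as.length = t → ∀ b : K,
      Nat.card {x : K // cDerivIter c as (fun y => y ^ (p ^ k + 1)) x = b}
        ≤ Nat.gcd (p ^ k + 1) (p ^ n - 1)) ∧
    (∃ as : List K, as.length = t ∧ ∃ b : K,
      Nat.card {x : K // cDerivIter c as (fun y => y ^ (p ^ k + 1)) x = b}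
        = Nat.gcd (p ^ k + 1) (p ^ n - 1)) :=
  stmt19_general p n k hp K hK c hcsub hc t
end
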